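/- arXiv:2407.08375 — 6 statements merged into one kernel-verified Lean document; each statement's English description precedes it below -/
import Mathlib

section
/- In any pre-meadow, for each z ∈ 0·P the set P_z = {x ∈ P : 0·x = z} is closed under addition, negation, and multiplication, contains z as additive identity and z+1 as multiplicative identity, and is a commutative unital ring with these operations. -/
structure IsPreMeadow (P : Type*) [Add P] [Mul P] [Neg P] [Zero P] [One P] : Prop where
  padd_assoc : ∀ x y z : P, (x + y) + z = x + (y + z)
  padd_comm : ∀ x y : P, x + y = y + x
  padd_zero : ∀ x : P, x + 0 = x
  padd_neg : ∀ x : P, x + (-x) = 0 * x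
  pmul_assoc : ∀ x y z : P, (x * y) * z = x * (y * z)
  pmul_comm : ∀ x y : P, x * y = y * x
  pone_mul : ∀ x : P, 1 * x = x
  pmul_add : ∀ x y z : P, x * (y + z) = x * y + x * z
  pneg_neg : ∀ x : P, -(-x) = x
  pzero_mul_add : ∀ x y : P, 0 * (x + y) = 0 * x * y

/-- For `z ∈ 0·P`, the fiber `P_z = {x | 0·x = z}` is closed under addition, negation and
multiplication, has `z` as additive identity, `-` as additive inverse and `z + 1` as
multiplicative identity; together with the globally valid associativity, commutativity and
distributivity laws of the pre-meadow, this makes `P_z` a commutative unital ring. -/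
theorem flasque_meadows_stmt3 {P : Type*} [Add P] [Mul P] [Neg P] [Zero P] [One P]
    (h : IsPreMeadow P) (z : P) (hz : ∃ w : P, 0 * w = z) :
    (∀ x y : P, 0 * x = z → 0 * y = z → 0 * (x + y) = z) ∧
    (∀ x : P, 0 * x = z → 0 * (-x) = z) ∧
    (∀ x y : P, 0 * x = z → 0 * y = z → 0 * (x * y) = z) ∧
    (0 * z = z) ∧
    (0 * (z + 1) = z) ∧
    (∀ x : P, 0 * x = z → x + z = x) ∧
    (∀ x : P, 0 * x = z → x + (-x) = z) ∧
    (∀ x : P, 0 * x = z → (z + 1) * x = x) ∧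
    (∀ x y w : P, 0 * x = z → 0 * y = z → 0 * w = z → (x + y) + w = x + (y + w)) ∧
    (∀ x y : P, 0 * x = z → 0 * y = z → x + y = y + x) ∧
    (∀ x y w : P, 0 * x = z → 0 * y = z → 0 * w = z → (x * y) * w = x * (y * w)) ∧
    (∀ x y : P, 0 * x = z → 0 * y = z → x * y = y * x) ∧
    (∀ x y w : P, 0 * x = z → 0 * y = z → 0 * w = z → x * (y + w) = x * y + x * w) := by

  obtain ⟨w, hw⟩ := hz
  -- 0 * (0 * x) = 0 * x
  have hA : ∀ x : P, 0 * (0 * x) = 0 * x := by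
    intro x
    have := h.pzero_mul_add x 0
    rw [h.padd_zero] at this
    rw [h.pmul_comm (0*x) 0] at this
    exact this.symm
  -- 0 * (-x) = 0 * x
  have hneg : ∀ x : P, 0 * (-x) = 0 * x := by
    intro x
    have h1 := h.padd_neg x
    have h2 := h.padd_neg (-x)
    rw [h.pneg_neg] at h2
    rw [h.padd_comm] at h2
    rw [h1] at h2
    exact h2.symm
  -- (0 * x) * x = 0 * x
  have hB : ∀ x : P, (0 * x) * x = 0 * x := by
    intro x
    have h1 := h.pzero_mul_add (-x) (-(-x))
    rw [h.padd_neg, hA, hneg, h.pneg_neg] at h1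
    exact h1.symm
  -- x + 0 * x = x
  have hC : ∀ x : P, x + 0 * x = x := by
    intro x
    have h1 := h.pmul_add x 1 0
    rw [h.padd_zero] at h1
    rw [h.pmul_comm x 1, h.pone_mul] at h1
    rw [h.pmul_comm x 0] at h1
    exact h1.symm
  refine ⟨?_, ?_, ?_, ?_, ?_, ?_, ?_, ?_, ?_, ?_, ?_, ?_, ?_⟩
  · intro x y hx hy
    rw [h.pzero_mul_add, hx, ← hy, hB]
  · intro x hx; rw [hneg]; exact hx
  · intro x y hx hy
    rw [← h.pmul_assoc, hx, ← hy, hB]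
  · rw [← hw, hA]
  · rw [h.pzero_mul_add, ← hw, hA, hw, h.pmul_comm, h.pone_mul]
  · intro x hx; rw [← hx]; exact hC x
  · intro x hx; rw [h.padd_neg]; exact hx
  · intro x hx
    rw [h.pmul_comm, h.pmul_add, h.pmul_comm x 1, h.pone_mul, h.pmul_comm x z,
      ← hx, hB, hx, h.padd_comm, ← hx, hC]
  · intro x y w _ _ _; exact h.padd_assoc x y w
  · intro x y _ _; exact h.padd_comm x y
  · intro x y w _ _ _; exact h.pmul_assoc x y w
  · intro x y _ _; exact h.pmul_comm x y
  · intro x y w _ _ _; exact h.pmul_add x y w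
end

section
/- In a pre-meadow P, if z, z' ∈ 0·P satisfy z·z' = z (i.e. z ≤ z' in the lattice order), then the map f_{z,z'} : P_{z'} → P_z given by x ↦ x + z is a unital ring homomorphism between the rings P_{z'} and P_z. -/
/-- If `z, z' ∈ 0·P` and `z ≤ z'` (i.e. `z·z' = z`), then `f : x ↦ x + z` maps the ring `P_{z'}`
to the ring `P_z`, sends the zero `z'` to `z`, the unit `z' + 1` to `z + 1`, and preserves
addition and multiplication: it is a unital ring homomorphism. -/
theorem flasque_meadows_stmt4 {P : Type*} [Add P] [Mul P] [Neg P] [Zero P] [One P]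
    (h : IsPreMeadow P) (z z' : P) (hz : ∃ w : P, 0 * w = z) (hz' : ∃ w : P, 0 * w = z')
    (hle : z * z' = z) :
    (∀ x : P, 0 * x = z' → 0 * (x + z) = z) ∧
    (z' + z = z) ∧
    ((z' + 1) + z = z + 1) ∧
    (∀ x y : P, 0 * x = z' → 0 * y = z' → (x + y) + z = (x + z) + (y + z)) ∧
    (∀ x y : P, 0 * x = z' → 0 * y = z' → (x * y) + z = (x + z) * (y + z)) := by
  obtain ⟨w, hw⟩ := hz
  obtain ⟨w', hw'⟩ := hz'
  have hmulc := h.pmul_comm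
  have haddc := h.padd_comm
  -- 0 * 1 = 0
  have n1 : (0 : P) * 1 = 0 := by rw [hmulc, h.pone_mul]
  -- x + 0*x = x
  have L4 : ∀ x : P, x + 0 * x = x := by
    intro x
    have h1 : x * (1 + 0) = x * 1 + x * 0 := h.pmul_add x 1 0
    rw [h.padd_zero, hmulc x 1, h.pone_mul, hmulc x 0] at h1
    exact h1.symm
  -- 0*x*y = 0*y*x
  have L5 : ∀ x y : P, 0 * x * y = 0 * y * x := by
    intro x y
    rw [← h.pzero_mul_add, ← h.pzero_mul_add, haddc]
  -- 0*(0*x) = 0*x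
  have nn : ∀ x : P, 0 * (0 * x) = 0 * x := by
    intro x
    have h1 := h.pzero_mul_add x 0
    rw [h.padd_zero] at h1
    rw [hmulc]
    exact h1.symm
  have nz : (0 : P) * z = z := by rw [← hw]; exact nn w
  have nz' : (0 : P) * z' = z' := by rw [← hw']; exact nn w'
  -- z*z = z
  have zz : z * z = z := by rw [← hw, ← h.pzero_mul_add, L4]
  -- z + z = z
  have L7 : z + z = z := by
    have h1 := L4 z
    rwa [nz] at h1
  have hz'z : z' * z = z := (hmulc z' z).trans hle
  -- z * x = z whenever 0*x = z'
  have zmul : ∀ x : P, 0 * x = z' → z * x = z := by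
    intro x hx
    have h1 : 0 * z * x = 0 * x * z := L5 z x
    rwa [nz, hx, hz'z] at h1
  have zw' : z * w' = z := by
    have h1 := L5 z w'
    rwa [nz, hw', hz'z] at h1
  have n1z : (0 : P) * (1 + z) = z := by rw [h.pzero_mul_add, n1, nz]
  -- part 2
  have p2 : z' + z = z := by
    have e1 : z' + z = z' * (1 + z) := by
      rw [h.pmul_add, hmulc z' 1, h.pone_mul, hz'z]
    rw [e1, ← hw', L5, n1z]
    exact zw'
  refine ⟨?_, p2, ?_, ?_, ?_⟩
  · intro x hx
    rw [h.pzero_mul_add, hx, hmulc, hle]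
  · rw [h.padd_assoc, haddc 1 z, ← h.padd_assoc, p2]
  · intro x y _ _
    rw [h.padd_assoc x z, ← h.padd_assoc z y z, haddc z y, h.padd_assoc y z z, L7,
      ← h.padd_assoc]
  · intro x y hx hy
    rw [h.pmul_add (x + z) y z, hmulc (x + z) y, hmulc (x + z) z, h.pmul_add y x z,
      h.pmul_add z x z, hmulc y x, hmulc y z, zmul y hy, zmul x hx, zz, L7,
      h.padd_assoc, L7]
end

section
/- Let P be a pre-meadow with a. If for every z ∈ 0·P the transition map f_{0,z} : P_0 → P_z is surjective, then for all z, w ∈ 0·P with z ≤ w the transition map f_{z,w} : P_w → P_z is surjective. Hence P is flasque if and only if all transition maps from P_0 are surjective. -/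
structure IsPreMeadowA (P : Type*) [Add P] [Mul P] [Neg P] [Zero P] [One P] (a : P)
    extends IsPreMeadow P : Prop where
  a_mem : ∃ x : P, 0 * x = a
  a_fiber : ∀ x : P, 0 * x = a → x = a
  a_unique : ∀ z : P, (∃ x : P, 0 * x = z) →
    (∀ x y : P, 0 * x = z → 0 * y = z → x = y) → z = a
  add_a : ∀ x : P, x + a = a

/-- In a pre-meadow with `a`: if every transition map `f_{0,z} : P_0 → P_z`, `x ↦ x + z`,
is surjective, then every transition map `f_{z,w} : P_w → P_z` (for `z ≤ w` in `0·P`) is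
surjective; hence `P` is flasque iff all transition maps from `P_0` are surjective. -/
theorem flasque_meadows_stmt6 {P : Type*} [Add P] [Mul P] [Neg P] [Zero P] [One P] {a : P}
    (h : IsPreMeadowA P a) :
    ((∀ z : P, (∃ w : P, 0 * w = z) →
        ∀ y : P, 0 * y = z → ∃ x : P, 0 * x = 0 ∧ x + z = y) →
      (∀ z w : P, (∃ u : P, 0 * u = z) → (∃ u : P, 0 * u = w) → z * w = z →
        ∀ y : P, 0 * y = z → ∃ x : P, 0 * x = w ∧ x + z = y)) ∧
    ((∀ z w : P, (∃ u : P, 0 * u = z) → (∃ u : P, 0 * u = w) → z * w = z →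
        ∀ y : P, 0 * y = z → ∃ x : P, 0 * x = w ∧ x + z = y) ↔
      (∀ z : P, (∃ w : P, 0 * w = z) →
        ∀ y : P, 0 * y = z → ∃ x : P, 0 * x = 0 ∧ x + z = y)) := by

  obtain ⟨hm, ha_mem, ha_fib, ha_un, hadd_a⟩ := h
  obtain ⟨hac, hcomm, hz0, hneg, hmassoc, hmcomm, honemul, hdist, hnn, hP10⟩ := hm
  -- 0 * 1 = 0
  have h01 : (0 : P) * 1 = 0 := by rw [hmcomm, honemul]
  -- 0 * (0 * u) = 0 * u
  have hidem : ∀ u : P, (0 : P) * (0 * u) = 0 * u := by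
    intro u
    have h1 : (0 : P) * u = 0 * u * 0 := by
      have := hP10 u 0
      rw [hz0] at this
      exact this
    calc (0 : P) * (0 * u) = 0 * (u * 0) := by rw [hmcomm u 0]
      _ = 0 * u * 0 := (hmassoc 0 u 0).symm
      _ = 0 * u := h1.symm
  -- main step: special → general
  have main : (∀ z : P, (∃ w : P, 0 * w = z) →
        ∀ y : P, 0 * y = z → ∃ x : P, 0 * x = 0 ∧ x + z = y) →
      (∀ z w : P, (∃ u : P, 0 * u = z) → (∃ u : P, 0 * u = w) → z * w = z →
        ∀ y : P, 0 * y = z → ∃ x : P, 0 * x = w ∧ x + z = y) := by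
    intro hs z w hz hw hzw y hy
    obtain ⟨v, hv⟩ := hz
    obtain ⟨u, hu⟩ := hw
    obtain ⟨x₀, hx₀, hx₀z⟩ := hs z ⟨v, hv⟩ y hy
    have h0w : (0 : P) * w = w := by rw [← hu, hidem]
    have h0z : (0 : P) * z = z := by rw [← hv, hidem]
    have hz0' : z * 0 = z := by rw [hmcomm]; exact h0z
    -- w + z = z
    have hwz : z + w = z := by
      calc z + w = 0 * v + 0 * u := by rw [hv, hu]
        _ = 0 * (v + u) := (hdist 0 v u).symm
        _ = 0 * v * u := hP10 v u
        _ = z * u := by rw [hv]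
        _ = z * 0 * u := by rw [hz0']
        _ = z * (0 * u) := hmassoc z 0 u
        _ = z * w := by rw [hu]
        _ = z := hzw
    refine ⟨x₀ + w, ?_, ?_⟩
    · calc (0 : P) * (x₀ + w) = 0 * x₀ * w := hP10 x₀ w
        _ = 0 * w := by rw [hx₀]
        _ = w := h0w
    · calc x₀ + w + z = x₀ + (w + z) := hac x₀ w z
        _ = x₀ + (z + w) := by rw [hcomm w z]
        _ = x₀ + z := by rw [hwz]
        _ = y := hx₀z
  refine ⟨main, ⟨?_, main⟩⟩
  intro hg z hz y hy
  obtain ⟨v, hv⟩ := hz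
  have h0z : (0 : P) * z = z := by rw [← hv, hidem]
  have hz0' : z * 0 = z := by rw [hmcomm]; exact h0z
  exact hg z 0 ⟨v, hv⟩ ⟨1, h01⟩ hz0' y hy
end

section
/- Let F be a field and S a commutative idempotent monoid. Then M = (F × S) ⊔ {a} with componentwise operations, a absorbing, and inverse (x,s)^{-1} = (x^{-1}, s) if x ≠ 0 and (x,s)^{-1} = a if x = 0, 0^{-1} = a, a^{-1} = a, is a common meadow: it satisfies (M1) x·x^{-1} = 1 + 0·x^{-1}, (M2) (x·y)^{-1} = x^{-1}·y^{-1}, (M3) (1+0·x)^{-1} = 1+0·x, (M4) 0^{-1} = a. -/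
structure IsCommonMeadow (M : Type*) [Add M] [Mul M] [Neg M] [Zero M] [One M] [Inv M] (a : M)
    extends IsPreMeadowA M a : Prop where
  mmul_inv : ∀ x : M, x * x⁻¹ = 1 + 0 * x⁻¹
  minv_mul : ∀ x y : M, (x * y)⁻¹ = x⁻¹ * y⁻¹
  minv_one_add : ∀ x : M, (1 + 0 * x)⁻¹ = 1 + 0 * x
  minv_zero : (0 : M)⁻¹ = a

/-- `Md F S = (F × S) ⊔ {a}`, where the extra point `Option.none` plays the role of `a`. -/
def Md (F S : Type*) : Type _ := Option (F × S)

def mdAdd {F S : Type*} [Add F] [Mul S] : Option (F × S) → Option (F × S) → Option (F × S)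
  | Option.some p, Option.some q => Option.some (p.1 + q.1, p.2 * q.2)
  | _, _ => Option.none

def mdMul {F S : Type*} [Mul F] [Mul S] : Option (F × S) → Option (F × S) → Option (F × S)
  | Option.some p, Option.some q => Option.some (p.1 * q.1, p.2 * q.2)
  | _, _ => Option.none

def mdNeg {F S : Type*} [Neg F] : Option (F × S) → Option (F × S)
  | Option.some p => Option.some (-p.1, p.2)
  | Option.none => Option.none

open Classical in
/-- `(x,s)⁻¹ = (x⁻¹, s)` if `x ≠ 0`, and `(0,s)⁻¹ = a`, `a⁻¹ = a`. -/
noncomputable def mdInv {F S : Type*} [Zero F] [Inv F] : Option (F × S) → Option (F × S)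
  | Option.some p => if p.1 = 0 then Option.none else Option.some (p.1⁻¹, p.2)
  | Option.none => Option.none

instance {F S : Type*} [Add F] [Mul S] : Add (Md F S) := ⟨mdAdd⟩
instance {F S : Type*} [Mul F] [Mul S] : Mul (Md F S) := ⟨mdMul⟩
instance {F S : Type*} [Neg F] : Neg (Md F S) := ⟨mdNeg⟩
instance {F S : Type*} [Zero F] [One S] : Zero (Md F S) := ⟨Option.some (0, 1)⟩
instance {F S : Type*} [One F] [One S] : One (Md F S) := ⟨Option.some (1, 1)⟩
noncomputable instance {F S : Type*} [Zero F] [Inv F] : Inv (Md F S) := ⟨mdInv⟩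

section MdLemmas
variable {F S : Type*} [Field F] [CommMonoid S]

lemma md_add_def (x y : Md F S) : x + y = mdAdd x y := rfl
lemma md_mul_def (x y : Md F S) : x * y = mdMul x y := rfl
lemma md_neg_def (x : Md F S) : -x = mdNeg x := rfl
lemma md_inv_def (x : Md F S) : x⁻¹ = mdInv x := rfl
lemma md_zero_def : (0 : Md F S) = Option.some (0, 1) := rfl
lemma md_one_def : (1 : Md F S) = Option.some (1, 1) := rfl

end MdLemmas

/-- If `F` is a field and `S` a commutative idempotent monoid, then `M = (F × S) ⊔ {a}` with
componentwise operations, `a` absorbing, and the inverse `(x,s)⁻¹ = (x⁻¹, s)` for `x ≠ 0`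
(and `a` otherwise) is a common meadow, i.e. it satisfies (M1)–(M4) on top of being a
pre-meadow with `a`. -/
theorem flasque_meadows_stmt9 {F S : Type*} [Field F] [CommMonoid S]
    (hS : ∀ s : S, s * s = s) :
    IsCommonMeadow (Md F S) Option.none := by
  refine {
    padd_assoc := ?_, padd_comm := ?_, padd_zero := ?_, padd_neg := ?_,
    pmul_assoc := ?_, pmul_comm := ?_, pone_mul := ?_, pmul_add := ?_,
    pneg_neg := ?_, pzero_mul_add := ?_,
    a_mem := ⟨Option.none, rfl⟩, a_fiber := ?_, a_unique := ?_, add_a := ?_,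
    mmul_inv := ?_, minv_mul := ?_, minv_one_add := ?_, minv_zero := ?_ }
  · show ∀ x y z : Option (F × S), mdAdd (mdAdd x y) z = mdAdd x (mdAdd y z)
    rintro (_|⟨x1,x2⟩) (_|⟨y1,y2⟩) (_|⟨z1,z2⟩) <;>
      simp [md_add_def, mdAdd, add_assoc, mul_assoc]
  · show ∀ x y : Option (F × S), mdAdd x y = mdAdd y x
    rintro (_|⟨x1,x2⟩) (_|⟨y1,y2⟩) <;>
      simp [md_add_def, mdAdd, add_comm, mul_comm]
  · show ∀ x : Option (F × S), mdAdd x (some (0, 1)) = x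
    rintro (_|⟨x1,x2⟩) <;> simp [md_add_def, mdAdd, md_zero_def]
  · show ∀ x : Option (F × S), mdAdd x (mdNeg x) = mdMul (some (0, 1)) x
    rintro (_|⟨x1,x2⟩) <;>
      simp [md_add_def, md_mul_def, md_neg_def, mdAdd, mdMul, mdNeg, md_zero_def, hS]
  · show ∀ x y z : Option (F × S), mdMul (mdMul x y) z = mdMul x (mdMul y z)
    rintro (_|⟨x1,x2⟩) (_|⟨y1,y2⟩) (_|⟨z1,z2⟩) <;>
      simp [md_mul_def, mdMul, mul_assoc]
  · show ∀ x y : Option (F × S), mdMul x y = mdMul y x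
    rintro (_|⟨x1,x2⟩) (_|⟨y1,y2⟩) <;>
      simp [md_mul_def, mdMul, mul_comm]
  · show ∀ x : Option (F × S), mdMul (some (1, 1)) x = x
    rintro (_|⟨x1,x2⟩) <;> simp [md_mul_def, mdMul, md_one_def]
  · show ∀ x y z : Option (F × S), mdMul x (mdAdd y z) = mdAdd (mdMul x y) (mdMul x z)
    rintro (_|⟨x1,x2⟩) (_|⟨y1,y2⟩) (_|⟨z1,z2⟩) <;>
      simp [md_add_def, md_mul_def, mdAdd, mdMul, mul_add]
    have key : ∀ a b c : S, a * b * (a * c) = a * (b * c) := by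
      intro a b c; rw [mul_mul_mul_comm, hS]
    rw [key]
  · show ∀ x : Option (F × S), mdNeg (mdNeg x) = x
    rintro (_|⟨x1,x2⟩) <;> simp [md_neg_def, mdNeg]
  · show ∀ x y : Option (F × S), mdMul (some (0, 1)) (mdAdd x y) = mdMul (mdMul (some (0, 1)) x) y
    rintro (_|⟨x1,x2⟩) (_|⟨y1,y2⟩) <;>
      simp [md_add_def, md_mul_def, mdAdd, mdMul, md_zero_def]
  · show ∀ x : Option (F × S), mdMul (some (0, 1)) x = none → x = none
    rintro (_|⟨x1,x2⟩) h
    · rfl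
    · simp [md_mul_def, mdMul, md_zero_def] at h
  · show ∀ z : Option (F × S), (∃ x : Option (F × S), mdMul (some (0, 1)) x = z) →
      (∀ x y : Option (F × S), mdMul (some (0, 1)) x = z → mdMul (some (0, 1)) y = z → x = y) → z = none
    rintro (_|⟨z1,z2⟩) ⟨x, hx⟩ h
    · rfl
    · exfalso
      have hz1 : z1 = 0 := by
        rcases x with _|⟨x1,x2⟩
        · simp [md_mul_def, mdMul, md_zero_def] at hx
        · simp only [md_mul_def, mdMul, md_zero_def, zero_mul, one_mul] at hx
          injection hx with h2
          injection h2 with ha hb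
          exact ha.symm
      subst hz1
      have h0 : (0 : Md F S) * (show Md F S from Option.some ((0 : F), z2)) = Option.some (0, z2) := by
        show mdMul (some ((0 : F), (1 : S))) (some ((0 : F), z2)) = some (0, z2)
        simp [md_mul_def, mdMul, md_zero_def]
      have h1 : (0 : Md F S) * (show Md F S from Option.some ((1 : F), z2)) = Option.some (0, z2) := by
        show mdMul (some ((0 : F), (1 : S))) (some ((1 : F), z2)) = some (0, z2)
        simp [md_mul_def, mdMul, md_zero_def]
      have h3 := h _ _ h0 h1
      injection h3 with h4
      injection h4 with h5 h6
      exact one_ne_zero h5.symm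
  · rintro (_|⟨x1,x2⟩) <;> rfl
  · show ∀ x : Option (F × S), mdMul x (mdInv x) = mdAdd (some (1, 1)) (mdMul (some (0, 1)) (mdInv x))
    rintro (_|⟨x1,x2⟩)
    · rfl
    · by_cases hx : x1 = 0
      · subst hx
        simp [md_mul_def, md_add_def, md_inv_def, mdMul, mdAdd, mdInv, md_zero_def, md_one_def]
      · simp [md_mul_def, md_add_def, md_inv_def, mdMul, mdAdd, mdInv, md_zero_def,
          md_one_def, hx, mul_inv_cancel₀, hS]
  · show ∀ x y : Option (F × S), mdInv (mdMul x y) = mdMul (mdInv x) (mdInv y)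
    rintro (_|⟨x1,x2⟩) (_|⟨y1,y2⟩) <;>
      simp [md_mul_def, md_inv_def, mdMul, mdInv]
    by_cases hx : x1 = 0
    · simp [hx]
    · by_cases hy : y1 = 0
      · simp [hx, hy]
      · simp [hx, hy, mul_ne_zero hx hy, mul_inv, mul_comm]
  · show ∀ x : Option (F × S), mdInv (mdAdd (some (1, 1)) (mdMul (some (0, 1)) x)) = mdAdd (some (1, 1)) (mdMul (some (0, 1)) x)
    rintro (_|⟨x1,x2⟩)
    · rfl
    · simp [md_mul_def, md_add_def, md_inv_def, mdMul, mdAdd, mdInv, md_zero_def, md_one_def]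
  · show mdInv (some ((0 : F), (1 : S))) = none
    simp [md_inv_def, mdInv, md_zero_def]
end

section
/- Let P be a flasque pre-meadow with a. Then the set J_x = {z ∈ 0·P : x + z is invertible in the ring P_z} has a greatest element for all x ∈ P if and only if it has a greatest element for all x ∈ P_0. -/
/-- `z ∈ J_x`: `z ∈ 0·P` and `x + z` is an invertible element of the ring `P_z`
(whose unit is `z + 1`). -/
def memJ {P : Type*} [Add P] [Mul P] [Zero P] [One P] (x z : P) : Prop :=
  (∃ w : P, 0 * w = z) ∧ 0 * (x + z) = z ∧ ∃ y : P, 0 * y = z ∧ (x + z) * y = z + 1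

/-- `z₀` is the greatest element of `J_x` with respect to the order `z ≤ w ↔ z·w = z`. -/
def isGreatestJ {P : Type*} [Add P] [Mul P] [Zero P] [One P] (x z₀ : P) : Prop :=
  memJ x z₀ ∧ ∀ z : P, memJ x z → z * z₀ = z

section
variable {P : Type*} [Add P] [Mul P] [Neg P] [Zero P] [One P] (h : IsPreMeadow P)
include h

lemma pm_mul_one (x : P) : x * 1 = x := by rw [h.pmul_comm, h.pone_mul]

lemma pm_add_zero_mul (x : P) : x + 0 * x = x := by
  calc x + 0 * x = x * 1 + x * 0 := by rw [pm_mul_one h, h.pmul_comm x 0]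
  _ = x * (1 + 0) := (h.pmul_add x 1 0).symm
  _ = x := by rw [h.padd_zero, pm_mul_one h]

lemma pm_zz : (0 : P) * 0 = 0 := by
  have := pm_add_zero_mul h (0 : P)
  rwa [h.padd_comm, h.padd_zero] at this

lemma pm_zmul_idem (x : P) : 0 * (0 * x) = 0 * x := by rw [← h.pmul_assoc, pm_zz h]

lemma pm_keyA {z : P} (hz : 0 * z = z) (w : P) : z + z * w = z * w := by
  calc z + z * w = z * 1 + z * w := by rw [pm_mul_one h]
  _ = z * (1 + w) := (h.pmul_add z 1 w).symm
  _ = (0 * z) * (1 + w) := by rw [hz]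
  _ = 0 * (z + (1 + w)) := (h.pzero_mul_add z (1 + w)).symm
  _ = 0 * ((z + w) + 1) := by rw [h.padd_comm 1 w, ← h.padd_assoc]
  _ = (0 * (z + w)) * 1 := h.pzero_mul_add (z + w) 1
  _ = 0 * (z + w) := pm_mul_one h _
  _ = (0 * z) * w := h.pzero_mul_add z w
  _ = z * w := by rw [hz]

lemma pm_add_self {z : P} (hz : 0 * z = z) : z + z = z := by
  have := pm_keyA h hz 1
  rwa [pm_mul_one h] at this

lemma pm_mul_self {z : P} (hz : 0 * z = z) : z * z = z := by
  calc z * z = (0 * z) * z := by rw [hz]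
  _ = 0 * (z + z) := (h.pzero_mul_add z z).symm
  _ = 0 * z := by rw [pm_add_self h hz]
  _ = z := hz

lemma pm_mul_zmul {z : P} (hz : 0 * z = z) (x : P) : z * x = z * (0 * x) := by
  calc z * x = (0 * z) * x := by rw [hz]
  _ = 0 * (z + x) := (h.pzero_mul_add z x).symm
  _ = 0 * (x + z) := by rw [h.padd_comm]
  _ = (0 * x) * z := h.pzero_mul_add x z
  _ = z * (0 * x) := h.pmul_comm _ _

lemma pm_le_add {z w : P} (hz : 0 * z = z) (hzw : z * w = w) : z + w = w := by
  rw [← hzw]; exact pm_keyA h hz w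

lemma pm_down {x₀ w w' : P} (hx₀ : 0 * x₀ = 0) (hm : memJ x₀ w)
    (hw' : 0 * w' = w') (hle : w * w' = w') : memJ x₀ w' := by
  obtain ⟨⟨u, hu⟩, hzm, y, hy0, hy⟩ := hm
  have hw : 0 * w = w := by rw [← hu, pm_zmul_idem h]
  have hx0w' : x₀ * w' = w' := by
    rw [h.pmul_comm, pm_mul_zmul h hw', hx₀, h.pmul_comm]; exact hw'
  have hw'w' : w' * w' = w' := pm_mul_self h hw'
  have hww' : w + w' = w' := pm_le_add h hw hle
  have hwy : w * y = w := by
    rw [pm_mul_zmul h hw, hy0]; exact pm_mul_self h hw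
  have hw'y : w' * y = w' := by
    rw [pm_mul_zmul h hw', hy0, h.pmul_comm]; exact hle
  have hxy : x₀ * y + w = w + 1 := by
    have : (x₀ + w) * y = x₀ * y + w * y := by
      rw [h.pmul_comm, h.pmul_add, h.pmul_comm y x₀, h.pmul_comm y w]
    rw [this, hwy] at hy
    exact hy
  refine ⟨⟨w', hw'⟩, ?_, y + w', ?_, ?_⟩
  · rw [h.pzero_mul_add, hx₀]; exact hw'
  · rw [h.pzero_mul_add, hy0]; exact hle
  · calc (x₀ + w') * (y + w')
        = (x₀ + w') * y + (x₀ + w') * w' := h.pmul_add _ _ _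
      _ = (x₀ * y + w' * y) + (x₀ * w' + w' * w') := by
          rw [h.pmul_comm _ y, h.pmul_add, h.pmul_comm y x₀, h.pmul_comm y w',
            h.pmul_comm _ w', h.pmul_add, h.pmul_comm w' x₀]
      _ = (x₀ * y + w') + (w' + w') := by rw [hw'y, hx0w', hw'w']
      _ = x₀ * y + w' := by
          rw [pm_add_self h hw', h.padd_assoc, pm_add_self h hw']
      _ = (x₀ * y + w) + w' := by rw [h.padd_assoc, hww']
      _ = (w + 1) + w' := by rw [hxy]
      _ = (w + w') + 1 := by
          rw [h.padd_assoc, h.padd_comm 1 w', ← h.padd_assoc]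
      _ = w' + 1 := by rw [hww']

lemma pm_transfer {x x₀ z : P} (hz' : 0 * z = z) (hsum : x₀ + z = x)
    {w : P} (hzw : z * w = w) : x + w = x₀ + w := by
  rw [← hsum, h.padd_assoc, pm_le_add h hz' hzw]

lemma pm_memJ_iff {x x₀ z : P} (hz : 0 * x = z) (hz' : 0 * z = z) (hx₀ : 0 * x₀ = 0)
    (hsum : x₀ + z = x) (w : P) : memJ x w ↔ (memJ x₀ w ∧ z * w = w) := by
  constructor
  · rintro ⟨⟨u, hu⟩, hm, y, hy0, hy⟩
    have hzw : z * w = w := by rw [← hz, ← h.pzero_mul_add]; exact hm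
    have ht : x + w = x₀ + w := pm_transfer h hz' hsum hzw
    refine ⟨⟨⟨u, hu⟩, ?_, y, hy0, ?_⟩, hzw⟩
    · have hw : 0 * w = w := by rw [← hu, pm_zmul_idem h]
      rw [h.pzero_mul_add, hx₀]; exact hw
    · rw [← ht]; exact hy
  · rintro ⟨⟨⟨u, hu⟩, hm, y, hy0, hy⟩, hzw⟩
    have ht : x + w = x₀ + w := pm_transfer h hz' hsum hzw
    refine ⟨⟨u, hu⟩, ?_, y, hy0, ?_⟩
    · rw [h.pzero_mul_add, hz]; exact hzw
    · rw [ht]; exact hy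

end
/-- Let `P` be a flasque pre-meadow with `a`. Then `J_x` has a greatest element for all
`x ∈ P` if and only if it has a greatest element for all `x ∈ P_0`. -/
theorem flasque_meadows_stmt14 {P : Type*} [Add P] [Mul P] [Neg P] [Zero P] [One P] {a : P}
    (h : IsPreMeadowA P a)
    (hflasque : ∀ z w : P, (∃ u : P, 0 * u = z) → (∃ u : P, 0 * u = w) → z * w = z →
      ∀ y : P, 0 * y = z → ∃ x : P, 0 * x = w ∧ x + z = y) :
    (∀ x : P, ∃ z₀ : P, isGreatestJ x z₀) ↔
      (∀ x : P, 0 * x = 0 → ∃ z₀ : P, isGreatestJ x z₀) := by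
  have hp : IsPreMeadow P := h.toIsPreMeadow
  constructor
  · intro H x _; exact H x
  · intro H x
    have hz' : 0 * (0 * x) = 0 * x := pm_zmul_idem hp x
    have hz0 : (0 * x) * 0 = 0 * x := by
      rw [← hp.pzero_mul_add, hp.padd_zero]
    obtain ⟨x₀, hx₀0, hx₀⟩ :=
      hflasque (0 * x) 0 ⟨x, rfl⟩ ⟨0, pm_zz hp⟩ hz0 x rfl
    obtain ⟨w₀, hm₀, hg₀⟩ := H x₀ hx₀0
    obtain ⟨u₀, hu₀⟩ := hm₀.1
    have hw₀ : 0 * w₀ = w₀ := by rw [← hu₀, pm_zmul_idem hp]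
    set z := 0 * x with hzdef
    set w₁ := z * w₀ with hw₁def
    have hw₁0 : 0 * w₁ = w₁ := by
      rw [hw₁def, ← hp.pmul_assoc, hz']
    have hle : w₀ * w₁ = w₁ := by
      rw [hw₁def, ← hp.pmul_assoc, hp.pmul_comm w₀ z, hp.pmul_assoc,
        pm_mul_self hp hw₀]
    have hm₁ : memJ x₀ w₁ := pm_down hp hx₀0 hm₀ hw₁0 hle
    have hz1 : z * w₁ = w₁ := by
      rw [hw₁def, ← hp.pmul_assoc, pm_mul_self hp hz']
    refine ⟨w₁, (pm_memJ_iff hp rfl hz' hx₀0 hx₀ w₁).mpr ⟨hm₁, hz1⟩, ?_⟩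
    intro w hw
    obtain ⟨hwm, hzw⟩ := (pm_memJ_iff hp rfl hz' hx₀0 hx₀ w).mp hw
    have hww₀ : w * w₀ = w := hg₀ w hwm
    rw [hw₁def, ← hp.pmul_assoc, hp.pmul_comm w z, hzw, hww₀]
end

section
/- In a common meadow, (x^{-1})^{-1} = x + 0·x^{-1} for every x; in particular if x·x^{-1} = 1 (i.e. 0·x^{-1} = 0) then (x^{-1})^{-1} = x. -/
namespace IsPreMeadow
variable {P : Type*} [Add P] [Mul P] [Neg P] [Zero P] [One P]

lemma zmul_one (hp : IsPreMeadow P) : (0 : P) * 1 = 0 := by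
  rw [hp.pmul_comm, hp.pone_mul]

lemma zmul_zero (hp : IsPreMeadow P) : (0 : P) * 0 = 0 := by
  have h1 : (0:P) * (0 + 1) = 0 * 0 * 1 := hp.pzero_mul_add 0 1
  rw [hp.padd_comm, hp.padd_zero, hp.zmul_one, hp.pmul_comm (0*0) 1, hp.pone_mul] at h1
  exact h1.symm

lemma zmul_zmul (hp : IsPreMeadow P) (z : P) : 0 * (0 * z) = 0 * z := by
  rw [← hp.pmul_assoc, hp.zmul_zero]

lemma zmul_one_add (hp : IsPreMeadow P) (z : P) : 0 * (1 + z) = 0 * z := by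
  rw [hp.pzero_mul_add, hp.zmul_one]

lemma add_zmul_self (hp : IsPreMeadow P) (x : P) : x + 0 * x = x := by
  have h : x * (1 + 0) = x * 1 + x * 0 := hp.pmul_add x 1 0
  rw [hp.padd_zero, hp.pmul_comm x 1, hp.pone_mul, hp.pmul_comm x 0] at h
  exact h.symm

end IsPreMeadow

namespace IsCommonMeadow
variable {M : Type*} [Add M] [Mul M] [Neg M] [Zero M] [One M] [Inv M] {a : M}

/-- `x⁻¹ · (x⁻¹)⁻¹ = 1 + 0·x⁻¹`, via (M2) and (M3). -/
lemma inv_mul_inv_inv (h : IsCommonMeadow M a) (x : M) :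
    x⁻¹ * (x⁻¹)⁻¹ = 1 + 0 * x⁻¹ := by
  calc x⁻¹ * (x⁻¹)⁻¹ = (x * x⁻¹)⁻¹ := (h.minv_mul x x⁻¹).symm
    _ = (1 + 0 * x⁻¹)⁻¹ := by rw [h.mmul_inv]
    _ = 1 + 0 * x⁻¹ := h.minv_one_add x⁻¹

/-- `0·(x⁻¹)⁻¹ = 0·x⁻¹`. -/
lemma zmul_inv_inv (h : IsCommonMeadow M a) (x : M) :
    0 * (x⁻¹)⁻¹ = 0 * x⁻¹ := by
  have hp := h.toIsPreMeadow
  have h1 : (1 : M) + 0 * (x⁻¹)⁻¹ = 1 + 0 * x⁻¹ := by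
    rw [← h.mmul_inv x⁻¹, h.inv_mul_inv_inv x]
  have h2 := congrArg (fun t => (0 : M) * t) h1
  simpa [hp.zmul_one_add, hp.zmul_zmul] using h2

end IsCommonMeadow

/-- In a common meadow, `(x⁻¹)⁻¹ = x + 0·x⁻¹` for every `x`; in particular, if
`x·x⁻¹ = 1` then `(x⁻¹)⁻¹ = x`. -/
theorem flasque_meadows_stmt19 {M : Type*} [Add M] [Mul M] [Neg M] [Zero M] [One M] [Inv M]
    {a : M} (h : IsCommonMeadow M a) :
    (∀ x : M, (x⁻¹)⁻¹ = x + 0 * x⁻¹) ∧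
    (∀ x : M, x * x⁻¹ = 1 → (x⁻¹)⁻¹ = x) := by
  have hp := h.toIsPreMeadow
  have key : ∀ x : M, (x⁻¹)⁻¹ = x + 0 * x⁻¹ := by
    intro x
    have hzinv : 0 * (x * x⁻¹) = 0 * x⁻¹ := by
      rw [h.mmul_inv x, hp.zmul_one_add, hp.zmul_zmul]
    have hx0 : x * (0 * x⁻¹) = 0 * x⁻¹ := by
      rw [hp.pmul_comm x (0 * x⁻¹), hp.pmul_assoc, hp.pmul_comm x⁻¹ x, hzinv]
    have hy0 : (x⁻¹)⁻¹ * (0 * x⁻¹) = 0 * x⁻¹ := by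
      rw [hp.pmul_comm ((x⁻¹)⁻¹) (0 * x⁻¹), hp.pmul_assoc,
        h.inv_mul_inv_inv x, hp.zmul_one_add, hp.zmul_zmul]
    calc (x⁻¹)⁻¹ = (x⁻¹)⁻¹ + 0 * (x⁻¹)⁻¹ := (hp.add_zmul_self _).symm
      _ = (x⁻¹)⁻¹ + 0 * x⁻¹ := by rw [h.zmul_inv_inv x]
      _ = (x⁻¹)⁻¹ * 1 + (x⁻¹)⁻¹ * (0 * x⁻¹) := by
          rw [hp.pmul_comm ((x⁻¹)⁻¹) 1, hp.pone_mul, hy0]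
      _ = (x⁻¹)⁻¹ * (1 + 0 * x⁻¹) := (hp.pmul_add _ _ _).symm
      _ = (x⁻¹)⁻¹ * (x⁻¹ * (x⁻¹)⁻¹) := by rw [h.inv_mul_inv_inv x]
      _ = (x⁻¹)⁻¹ * x⁻¹ * (x⁻¹)⁻¹ := (hp.pmul_assoc _ _ _).symm
      _ = x⁻¹ * (x⁻¹)⁻¹ * (x⁻¹)⁻¹ := by rw [hp.pmul_comm ((x⁻¹)⁻¹) x⁻¹]
      _ = (1 + 0 * x⁻¹) * (x⁻¹)⁻¹ := by rw [h.inv_mul_inv_inv x]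
      _ = (x * x⁻¹) * (x⁻¹)⁻¹ := by rw [← h.mmul_inv x]
      _ = x * (x⁻¹ * (x⁻¹)⁻¹) := hp.pmul_assoc _ _ _
      _ = x * (1 + 0 * x⁻¹) := by rw [h.inv_mul_inv_inv x]
      _ = x * 1 + x * (0 * x⁻¹) := hp.pmul_add _ _ _
      _ = x + 0 * x⁻¹ := by rw [hp.pmul_comm x 1, hp.pone_mul, hx0]
  refine ⟨key, fun x hx => ?_⟩
  have h1 : (1 : M) = 1 + 0 * x⁻¹ := by rw [← h.mmul_inv x, hx]
  have h0 : (0 : M) * x⁻¹ = 0 := by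
    have h2 := congrArg (fun t => (0 : M) * t) h1
    simpa [hp.zmul_one, hp.zmul_one_add, hp.zmul_zmul] using h2.symm
  rw [key x, h0, hp.padd_zero]
end
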